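/- For all integers n ≥ 1, m ≥ 1 and every rational number x, one has Σ_{k=0}^{n} f^A_{n−k}(n,m)·(x−1)^k = Σ_{k=0}^{n} h^A_{n−k}(n,m)·x^k, where h^A_k(n,m) = (1/(k+1))·C(n,k)·C((n+1)m, k); that is, the h-vector of the generalized cluster complex Δ^m(A_n) is given by h_k = (1/(k+1))·C(n,k)·C((n+1)m, k) (the type-A m-Narayana numbers). -/

import Mathlib

/-!
Write `M = (n+1)m`, `h_i = C(n,i) C(M,i)/(i+1)` and `f_i = C(n,i) C(M+i+1,i)/(i+1)`.
Substituting `x = y + 1` and expanding `(y+1)^k` binomially, the claim becomes the coefficient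
identity `Σ_i h_i C(n-i, j) = f_{n-j}`. Since `C(n,i) C(n-i,j) = C(n,j) C(n-j,i)` and
`C(i',r)/(r+1) = C(i'+1,r+1)/(i'+1)`, this is Vandermonde's identity
`Σ_r C(i'+1, r+1) C(M, r) = C(M+i'+1, i')` with `i' = n - j`.
-/

open Finset

/-- The binomial coefficient `C(a, b)` for integers `a, b`, with the convention
that it vanishes unless `0 ≤ b ≤ a`. -/
def cc (a b : ℤ) : ℚ :=
  if 0 ≤ b ∧ b ≤ a then (a.toNat.choose b.toNat : ℚ) else 0

/-- The type-A face numbers `f^A_k(n, m) = (1/(k+1))·C(n,k)·C((n+1)m+k+1, k)`: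
the number of `k`-element faces of the generalized cluster complex `Δ^m(A_n)`. -/
def fA (n m k : ℕ) : ℚ :=
  1 / ((k : ℚ) + 1) * cc n k * cc (((n : ℤ) + 1) * m + k + 1) k

/-- The type-B face numbers `f^B_k(n, m) = C(n,k)·C(nm+k, k)`:
the number of `k`-element faces of the generalized cluster complex `Δ^m(B_n)`. -/
def fB (n m k : ℕ) : ℚ :=
  cc n k * cc ((n : ℤ) * m + k) k

/-- The type-D face numbers
`f^D_k(n, m) = C(n,k)·C((n-1)m+k, k) + C(n-2,k-2)·C((n-1)m+k-1, k)`: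
the number of `k`-element faces of the generalized cluster complex `Δ^m(D_n)`. -/
def fD (n m k : ℕ) : ℚ :=
  cc n k * cc (((n : ℤ) - 1) * m + k) k
    + cc ((n : ℤ) - 2) ((k : ℤ) - 2) * cc (((n : ℤ) - 1) * m + k - 1) k

lemma cc_natCast (a b : ℕ) : cc a b = (a.choose b : ℚ) := by
  unfold cc
  split_ifs
  · simp
  · rw [Nat.choose_eq_zero_of_lt (by omega), Nat.cast_zero]

lemma fA_eq (n m k : ℕ) :
    fA n m k = n.choose k * ((n + 1) * m + k + 1).choose k / (k + 1) := by
  have hcast : ((n : ℤ) + 1) * m + k + 1 = (((n + 1) * m + k + 1 : ℕ) : ℤ) := by push_cast; ring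
  rw [fA, hcast, cc_natCast, cc_natCast]
  ring

lemma Nat.choose_mul_choose_sub_comm (n i j : ℕ) :
    n.choose i * (n - i).choose j = n.choose j * (n - j).choose i := by
  have hi := Nat.choose_mul (n := n) (k := i + j) (s := i) (by omega)
  have hj := Nat.choose_mul (n := n) (k := i + j) (s := j) (by omega)
  rw [Nat.add_sub_cancel_left] at hi
  rw [Nat.add_sub_cancel] at hj
  rw [← hi, ← hj, Nat.choose_symm_add]

lemma Nat.sum_range_choose_succ_mul_choose (M i : ℕ) :
    ∑ r ∈ range (i + 1), (i + 1).choose (r + 1) * M.choose r = (M + (i + 1)).choose i := by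
  rw [Nat.add_choose_eq, Nat.sum_antidiagonal_eq_sum_range_succ_mk]
  refine sum_congr rfl fun r hr => ?_
  rw [mul_comm, Nat.choose_symm_of_eq_add (show i + 1 = (r + 1) + (i - r) by grind)]

lemma sum_range_choose_mul_choose_div (M i : ℕ) :
    ∑ r ∈ range (i + 1), (i.choose r * M.choose r / (r + 1) : ℚ)
      = (M + i + 1).choose i / (i + 1) := by
  have hshift (r : ℕ) : (i.choose r / (r + 1) : ℚ) = (i + 1).choose (r + 1) / (i + 1) := by
    rw [div_eq_div_iff (by positivity) (by positivity), mul_comm]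
    exact_mod_cast Nat.add_one_mul_choose_eq i r
  calc ∑ r ∈ range (i + 1), (i.choose r * M.choose r / (r + 1) : ℚ)
      = (∑ r ∈ range (i + 1), ((i + 1).choose (r + 1) * M.choose r : ℕ)) / (i + 1) := by
        rw [Nat.cast_sum, sum_div]
        refine sum_congr rfl fun r _ => ?_
        rw [mul_div_right_comm, hshift, Nat.cast_mul]
        ring
    _ = (M + i + 1).choose i / (i + 1) := by
        rw [Nat.sum_range_choose_succ_mul_choose, add_assoc]

lemma sum_range_mul_add_one_pow {R : Type*} [CommSemiring R] (c : ℕ → R) (n : ℕ) (y : R) :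
    ∑ k ∈ range (n + 1), c k * (y + 1) ^ k
      = ∑ j ∈ range (n + 1), (∑ k ∈ range (n + 1), c k * k.choose j) * y ^ j := by
  have hexpand : ∀ k ∈ range (n + 1),
      c k * (y + 1) ^ k = ∑ j ∈ range (n + 1), c k * k.choose j * y ^ j := by
    intro k hk
    rw [add_pow, mul_sum]
    refine sum_subset (range_subset_range.mpr (by simpa using hk)) (fun j _ hj => ?_)
      |>.trans (sum_congr rfl fun j _ => by ring)
    rw [Nat.choose_eq_zero_of_lt (by simpa using hj)]
    simp
  rw [sum_congr rfl hexpand, sum_comm]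
  simp only [sum_mul]

lemma sum_range_reflect_narayana_mul_choose (n M j : ℕ) (hj : j ≤ n) :
    ∑ k ∈ range (n + 1),
        (n.choose (n - k) * M.choose (n - k) / ((n - k : ℕ) + 1) : ℚ) * k.choose j
      = n.choose (n - j) * (M + (n - j) + 1).choose (n - j) / ((n - j : ℕ) + 1) := by
  have hswap : ∀ i ∈ range (n + 1),
      (n.choose i * M.choose i / (i + 1) : ℚ) * (n - i).choose j
        = n.choose j * ((n - j).choose i * M.choose i / (i + 1)) := by
    intro i _
    have h : (n.choose i * (n - i).choose j : ℚ) = n.choose j * (n - j).choose i := by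
      exact_mod_cast Nat.choose_mul_choose_sub_comm n i j
    calc (n.choose i * M.choose i / (i + 1) : ℚ) * (n - i).choose j
        = (n.choose i * (n - i).choose j : ℚ) * M.choose i / (i + 1) := by ring
      _ = _ := by rw [h]; ring
  have htrunc : ∑ i ∈ range (n + 1), ((n - j).choose i * M.choose i / (i + 1) : ℚ)
      = ∑ i ∈ range (n - j + 1), ((n - j).choose i * M.choose i / (i + 1) : ℚ) := by
    refine (sum_subset (range_subset_range.mpr (by omega)) fun i _ hi => ?_).symm
    rw [Nat.choose_eq_zero_of_lt (by simpa using hi)]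
    simp
  rw [← sum_range_reflect]
  simp only [Nat.add_sub_cancel]
  rw [sum_congr rfl fun i hi => by rw [Nat.sub_sub_self (by simpa [Nat.lt_succ_iff] using hi)],
    sum_congr rfl hswap, ← mul_sum, htrunc, sum_range_choose_mul_choose_div, Nat.choose_symm hj]
  ring

theorem h_vector_type_A_general (n m : ℕ) (x : ℚ) :
    ∑ k ∈ Finset.range (n + 1), fA n m (n - k) * (x - 1) ^ k
      = ∑ k ∈ Finset.range (n + 1),
          (1 / (((n - k : ℕ) : ℚ) + 1) * cc n ((n : ℤ) - k)
            * cc (((n : ℤ) + 1) * m) ((n : ℤ) - k)) * x ^ k := by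
  set M := (n + 1) * m
  have hcoeff : ∀ k ∈ range (n + 1),
      1 / (((n - k : ℕ) : ℚ) + 1) * cc n ((n : ℤ) - k) * cc (((n : ℤ) + 1) * m) ((n : ℤ) - k)
        = n.choose (n - k) * M.choose (n - k) / ((n - k : ℕ) + 1) := by
    intro k hk
    have hsub : (n : ℤ) - k = ((n - k : ℕ) : ℤ) := by grind
    have hM : ((n : ℤ) + 1) * m = (M : ℤ) := by push_cast [M]; ring
    rw [hsub, hM, cc_natCast, cc_natCast]
    ring
  obtain ⟨y, rfl⟩ : ∃ y : ℚ, x = y + 1 := ⟨x - 1, by ring⟩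
  rw [sum_range_mul_add_one_pow, add_sub_cancel_right]
  refine sum_congr rfl fun j hj => congrArg (· * y ^ j) ?_
  rw [sum_congr rfl fun k hk => congrArg (· * (k.choose j : ℚ)) (hcoeff k hk),
    sum_range_reflect_narayana_mul_choose n M j (by simpa [Nat.lt_succ_iff] using hj), fA_eq]

/-- The `h`-vector of the generalized cluster complex `Δ^m(A_n)` is given by the
type-A `m`-Narayana numbers `h^A_k(n,m) = (1/(k+1))·C(n,k)·C((n+1)m, k)`:
for every rational `x`,
`Σ_{k=0}^{n} f^A_{n−k}(n,m)·(x−1)^k = Σ_{k=0}^{n} h^A_{n−k}(n,m)·x^k`. -/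
theorem h_vector_type_A (n m : ℕ) (hn : 1 ≤ n) (hm : 1 ≤ m) (x : ℚ) :
    ∑ k ∈ Finset.range (n + 1), fA n m (n - k) * (x - 1) ^ k
      = ∑ k ∈ Finset.range (n + 1),
          (1 / (((n - k : ℕ) : ℚ) + 1) * cc n ((n : ℤ) - k)
            * cc (((n : ℤ) + 1) * m) ((n : ℤ) - k)) * x ^ k :=
  h_vector_type_A_general n m x
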